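/- Let ψ : ℝ^{2×2} → ℝ be rank-one convex with ψ(G) ≤ dist²(G, K) for all G ∈ ℝ^{2×2}. Then for every F ∈ ℝ^{2×2} and every η ≥ |Fw| one has ψ(F) ≤ g(|Fv|, η, det F), and symmetrically for every ξ ≥ |Fv| one has ψ(F) ≤ g(ξ, |Fw|, det F), where v = (1,1)/√2 and w = (1,−1)/√2. -/

import Mathlib

/-!
For each well `U_i`, the rotation `Q` maximising `⟨F, Q U_i⟩` gives
`|F - Q U_i|² = |F|² + |U_i|² - 2 max_Q ⟨F, Q U_i⟩`, and `A(|Fv|, |Fw|, det F)` is the square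
of this maximum for one of the two wells, so `dist²(F, K) ≤ g(|Fv|, |Fw|, det F)`.
Along the rank-one line `t ↦ F + t a ⊗ w` with `|a| = 1` and `a ∥ Fv`, both `Fv` and `det F`
stay fixed while the image of `w` is `Fw + t a`, whose length equals any `η ≥ |Fw|` once for some
`t ≤ 0` and once for some `t ≥ 0`. Convexity of `ψ` on this line bounds `ψ(F)` by the common
bound `g(|Fv|, η, det F)` at these two points. Exchanging `v` and `w` gives the second bound.
-/
open Matrix

noncomputable section

def frobSq (F : Matrix (Fin 2) (Fin 2) ℝ) : ℝ := ∑ i, ∑ j, (F i j) ^ 2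

def SO2 : Set (Matrix (Fin 2) (Fin 2) ℝ) := {Q | Qᵀ * Q = 1 ∧ Q.det = 1}

def U1 (l : ℝ) : Matrix (Fin 2) (Fin 2) ℝ := !![l, 0; 0, 1 / l]

def U2 (l : ℝ) : Matrix (Fin 2) (Fin 2) ℝ := !![1 / l, 0; 0, l]

def Kset (l : ℝ) : Set (Matrix (Fin 2) (Fin 2) ℝ) :=
  {G | ∃ Q ∈ SO2, G = Q * U1 l ∨ G = Q * U2 l}

/-- Squared Frobenius distance from `F` to the set `K`. -/
def distSqK (l : ℝ) (F : Matrix (Fin 2) (Fin 2) ℝ) : ℝ :=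
  sInf {r | ∃ G ∈ Kset l, r = frobSq (F - G)}

def vvec : Fin 2 → ℝ := ![1 / Real.sqrt 2, 1 / Real.sqrt 2]

def wvec : Fin 2 → ℝ := ![1 / Real.sqrt 2, -(1 / Real.sqrt 2)]

def xF (F : Matrix (Fin 2) (Fin 2) ℝ) : ℝ := Real.sqrt (∑ i, (F.mulVec vvec i) ^ 2)

def yF (F : Matrix (Fin 2) (Fin 2) ℝ) : ℝ := Real.sqrt (∑ i, (F.mulVec wvec i) ^ 2)

def Afun (l x y d : ℝ) : ℝ :=
  (x ^ 2 + y ^ 2) * (l ^ 2 + 1 / l ^ 2) / 2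
    + (l ^ 2 - 1 / l ^ 2) * Real.sqrt (x ^ 2 * y ^ 2 - d ^ 2) + 2 * d

def gfun (l x y d : ℝ) : ℝ :=
  x ^ 2 + y ^ 2 + (l ^ 2 + 1 / l ^ 2) - 2 * Real.sqrt (Afun l x y d)

/-- A function `ψ` on 2×2 matrices is rank-one convex if it is convex along every
rank-one line `t ↦ F + t a⊗b`. -/
def RankOneConvex (ψ : Matrix (Fin 2) (Fin 2) ℝ → ℝ) : Prop :=
  ∀ (F : Matrix (Fin 2) (Fin 2) ℝ) (a b : Fin 2 → ℝ),
    ConvexOn ℝ Set.univ fun t : ℝ => ψ (F + t • vecMulVec a b)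

theorem ConvexOn.le_of_nonpos_of_nonneg {h : ℝ → ℝ} (hh : ConvexOn ℝ Set.univ h)
    {t₁ t₂ c : ℝ} (ht₁ : t₁ ≤ 0) (ht₂ : 0 ≤ t₂) (h₁ : h t₁ ≤ c) (h₂ : h t₂ ≤ c) : h 0 ≤ c :=
  (hh.le_on_segment (Set.mem_univ _) (Set.mem_univ _)
    (by rw [segment_eq_Icc (ht₁.trans ht₂)]; exact ⟨ht₁, ht₂⟩)).trans (max_le h₁ h₂)

section InnerProductSpace

variable {E : Type*} [NormedAddCommGroup E] [InnerProductSpace ℝ E]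

theorem exists_nonneg_norm_add_smul_eq {y u : E} (hu : ‖u‖ = 1) {η : ℝ} (hη : ‖y‖ ≤ η) :
    ∃ t : ℝ, 0 ≤ t ∧ ‖y + t • u‖ = η := by
  set p := inner ℝ y u
  -- `t` is the nonnegative root of `‖y + t • u‖² = t² + 2 p t + ‖y‖² = η²`
  have hD : p ^ 2 ≤ p ^ 2 + η ^ 2 - ‖y‖ ^ 2 := by nlinarith [norm_nonneg y]
  have hsq := Real.sq_sqrt ((sq_nonneg p).trans hD)
  refine ⟨-p + √(p ^ 2 + η ^ 2 - ‖y‖ ^ 2), ?_, ?_⟩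
  · linarith [le_abs_self p, Real.abs_le_sqrt hD]
  · rw [← sq_eq_sq₀ (norm_nonneg _) ((norm_nonneg y).trans hη), norm_add_sq_real,
      inner_smul_right, norm_smul, Real.norm_eq_abs, mul_pow, sq_abs, hu]
    linear_combination hsq

theorem ConvexOn.le_of_forall_norm_add_smul_eq {h : ℝ → ℝ} (hh : ConvexOn ℝ Set.univ h)
    {y u : E} (hu : ‖u‖ = 1) {η c : ℝ} (hη : ‖y‖ ≤ η)
    (hc : ∀ t, ‖y + t • u‖ = η → h t ≤ c) : h 0 ≤ c := by
  obtain ⟨t₂, ht₂, hy₂⟩ := exists_nonneg_norm_add_smul_eq hu hη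
  obtain ⟨t₁, ht₁, hy₁⟩ := exists_nonneg_norm_add_smul_eq (u := -u) (by rwa [norm_neg]) hη
  rw [smul_neg, ← neg_smul] at hy₁
  exact hh.le_of_nonpos_of_nonneg (neg_nonpos.2 ht₁) ht₂ (hc _ hy₁) (hc _ hy₂)

end InnerProductSpace

theorem frobSq_nonneg (F : Matrix (Fin 2) (Fin 2) ℝ) : 0 ≤ frobSq F := by
  unfold frobSq; positivity

theorem rotation_mem_SO2 {p q : ℝ} (h : p ^ 2 + q ^ 2 = 1) : !![p, -q; q, p] ∈ SO2 := by
  refine ⟨?_, by rw [det_fin_two_of]; linear_combination h⟩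
  rw [← Matrix.ext_iff]
  simp only [mul_apply, transpose_apply, of_apply, cons_val', cons_val_fin_one, Fin.sum_univ_two,
    cons_val_zero, cons_val_one, Fin.forall_fin_two, mul_neg, one_apply_eq, ne_eq, zero_ne_one,
    not_false_eq_true, one_apply_ne, neg_mul, one_ne_zero, neg_neg]
  exact ⟨⟨by linear_combination h, by ring⟩, by ring, by linear_combination h⟩

theorem frobSq_sub_rotation_mul {p q : ℝ} (h : p ^ 2 + q ^ 2 = 1)
    (F U : Matrix (Fin 2) (Fin 2) ℝ) :
    frobSq (F - !![p, -q; q, p] * U) = frobSq F + frobSq U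
      - 2 * (p * ((F * Uᵀ) 0 0 + (F * Uᵀ) 1 1) + q * ((F * Uᵀ) 1 0 - (F * Uᵀ) 0 1)) := by
  simp only [frobSq, Fin.sum_univ_two, Matrix.sub_apply, mul_apply, transpose_apply, of_apply,
    cons_val', cons_val_zero, cons_val_one, empty_val', cons_val_fin_one]
  linear_combination (U 0 0 ^ 2 + U 0 1 ^ 2 + U 1 0 ^ 2 + U 1 1 ^ 2) * h

theorem exists_sq_add_sq_eq_one_mul_add_mul_eq (α β : ℝ) :
    ∃ p q : ℝ, p ^ 2 + q ^ 2 = 1 ∧ p * α + q * β = √(α ^ 2 + β ^ 2) := by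
  have hr := Real.sq_sqrt (add_nonneg (sq_nonneg α) (sq_nonneg β))
  by_cases h0 : √(α ^ 2 + β ^ 2) = 0
  · have hα : α = 0 := by nlinarith [sq_nonneg α, sq_nonneg β]
    exact ⟨1, 0, by norm_num, by rw [h0, hα]; ring⟩
  · refine ⟨α / √(α ^ 2 + β ^ 2), β / √(α ^ 2 + β ^ 2), ?_, ?_⟩
    · field_simp; linear_combination -hr
    · field_simp; linear_combination -hr

theorem exists_mem_SO2_frobSq_sub_mul_eq (F U : Matrix (Fin 2) (Fin 2) ℝ) :
    ∃ Q ∈ SO2, frobSq (F - Q * U) = frobSq F + frobSq U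
      - 2 * √(((F * Uᵀ) 0 0 + (F * Uᵀ) 1 1) ^ 2 + ((F * Uᵀ) 1 0 - (F * Uᵀ) 0 1) ^ 2) := by
  obtain ⟨p, q, h, hpq⟩ := exists_sq_add_sq_eq_one_mul_add_mul_eq
    ((F * Uᵀ) 0 0 + (F * Uᵀ) 1 1) ((F * Uᵀ) 1 0 - (F * Uᵀ) 0 1)
  exact ⟨_, rotation_mem_SO2 h, by rw [frobSq_sub_rotation_mul h, hpq]⟩

theorem distSqK_le_frobSq_sub {l : ℝ} (F : Matrix (Fin 2) (Fin 2) ℝ)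
    {G : Matrix (Fin 2) (Fin 2) ℝ} (hG : G ∈ Kset l) : distSqK l F ≤ frobSq (F - G) :=
  csInf_le ⟨0, by rintro _ ⟨G, -, rfl⟩; exact frobSq_nonneg _⟩ ⟨G, hG, rfl⟩

theorem inv_sqrt_two_sq : (√2)⁻¹ ^ 2 = (2 : ℝ)⁻¹ := by
  rw [inv_pow, Real.sq_sqrt zero_le_two]

theorem sq_xF (F : Matrix (Fin 2) (Fin 2) ℝ) :
    xF F ^ 2 = ((F 0 0 + F 0 1) ^ 2 + (F 1 0 + F 1 1) ^ 2) / 2 := by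
  rw [xF, Real.sq_sqrt (by positivity)]
  simp only [mulVec, dotProduct, vvec, Fin.sum_univ_two, one_div, cons_val_zero, cons_val_one,
    cons_val_fin_one]
  linear_combination ((F 0 0 + F 0 1) ^ 2 + (F 1 0 + F 1 1) ^ 2) * inv_sqrt_two_sq

theorem sq_yF (F : Matrix (Fin 2) (Fin 2) ℝ) :
    yF F ^ 2 = ((F 0 0 - F 0 1) ^ 2 + (F 1 0 - F 1 1) ^ 2) / 2 := by
  rw [yF, Real.sq_sqrt (by positivity)]
  simp only [mulVec, dotProduct, wvec, Fin.sum_univ_two, one_div, cons_val_zero, cons_val_one,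
    cons_val_fin_one]
  linear_combination ((F 0 0 - F 0 1) ^ 2 + (F 1 0 - F 1 1) ^ 2) * inv_sqrt_two_sq

theorem frobSq_U1 (l : ℝ) : frobSq (U1 l) = l ^ 2 + 1 / l ^ 2 := by
  simp [frobSq, U1, Fin.sum_univ_two]

theorem frobSq_U2 (l : ℝ) : frobSq (U2 l) = l ^ 2 + 1 / l ^ 2 := by
  simp [frobSq, U2, Fin.sum_univ_two, add_comm]

theorem frobSq_eq_sq_xF_add_sq_yF (F : Matrix (Fin 2) (Fin 2) ℝ) :
    frobSq F = xF F ^ 2 + yF F ^ 2 := by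
  rw [sq_xF, sq_yF]; simp only [frobSq, Fin.sum_univ_two]; ring

theorem Afun_eq_or_eq {l : ℝ} (hl : l ≠ 0) (F : Matrix (Fin 2) (Fin 2) ℝ) :
    Afun l (xF F) (yF F) F.det = ((F * (U1 l)ᵀ) 0 0 + (F * (U1 l)ᵀ) 1 1) ^ 2
        + ((F * (U1 l)ᵀ) 1 0 - (F * (U1 l)ᵀ) 0 1) ^ 2 ∨
      Afun l (xF F) (yF F) F.det = ((F * (U2 l)ᵀ) 0 0 + (F * (U2 l)ᵀ) 1 1) ^ 2
        + ((F * (U2 l)ᵀ) 1 0 - (F * (U2 l)ᵀ) 0 1) ^ 2 := by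
  -- Lagrange's identity: `x² y² - det² = ⟨Fv, Fw⟩²`; the sign of `⟨Fv, Fw⟩` selects the well
  have hs : √(xF F ^ 2 * yF F ^ 2 - F.det ^ 2)
      = |(F 0 0 ^ 2 + F 1 0 ^ 2 - F 0 1 ^ 2 - F 1 1 ^ 2) / 2| := by
    rw [← Real.sqrt_sq_eq_abs, sq_xF, sq_yF, det_fin_two]; ring_nf
  unfold Afun
  rw [hs, sq_xF, sq_yF, det_fin_two]
  simp only [U1, U2, one_div, mul_apply, transpose_apply, of_apply, cons_val', cons_val_fin_one,
    cons_val_zero, Fin.sum_univ_two, cons_val_one, mul_zero, add_zero, zero_add]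
  rcases abs_choice ((F 0 0 ^ 2 + F 1 0 ^ 2 - F 0 1 ^ 2 - F 1 1 ^ 2) / 2) with h | h <;> rw [h]
  · left; field_simp; ring
  · right; field_simp; ring

theorem distSqK_le_gfun {l : ℝ} (hl : l ≠ 0) (F : Matrix (Fin 2) (Fin 2) ℝ) :
    distSqK l F ≤ gfun l (xF F) (yF F) F.det := by
  obtain ⟨Q₁, hQ₁, h₁⟩ := exists_mem_SO2_frobSq_sub_mul_eq F (U1 l)
  obtain ⟨Q₂, hQ₂, h₂⟩ := exists_mem_SO2_frobSq_sub_mul_eq F (U2 l)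
  have hd₁ := distSqK_le_frobSq_sub F (G := Q₁ * U1 l) ⟨Q₁, hQ₁, .inl rfl⟩
  have hd₂ := distSqK_le_frobSq_sub F (G := Q₂ * U2 l) ⟨Q₂, hQ₂, .inr rfl⟩
  rw [h₁, frobSq_U1, frobSq_eq_sq_xF_add_sq_yF] at hd₁
  rw [h₂, frobSq_U2, frobSq_eq_sq_xF_add_sq_yF] at hd₂
  unfold gfun
  rcases Afun_eq_or_eq hl F with hA | hA <;> rw [hA] <;> assumption

theorem norm_toLp_eq_sqrt_sum_sq (x : Fin 2 → ℝ) :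
    ‖(WithLp.toLp 2 x : EuclideanSpace ℝ (Fin 2))‖ = √(∑ i, x i ^ 2) := by
  simp [EuclideanSpace.norm_eq]

theorem exists_norm_eq_one_mul_eq_mul (x : Fin 2 → ℝ) :
    ∃ u : Fin 2 → ℝ,
      ‖(WithLp.toLp 2 u : EuclideanSpace ℝ (Fin 2))‖ = 1 ∧ u 0 * x 1 = u 1 * x 0 := by
  by_cases hx : x = 0
  · exact ⟨Pi.single 0 1, by simp, by simp [hx]⟩
  · refine ⟨‖(WithLp.toLp 2 x : EuclideanSpace ℝ (Fin 2))‖⁻¹ • x, ?_, ?_⟩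
    · have hx' : ‖(WithLp.toLp 2 x : EuclideanSpace ℝ (Fin 2))‖ ≠ 0 := by simpa using hx
      rw [WithLp.toLp_smul, norm_smul, norm_inv, norm_norm, inv_mul_cancel₀ hx']
    · simp only [Pi.smul_apply, smul_eq_mul]; ring

theorem add_smul_vecMulVec_mulVec {n : Type*} [Fintype n] (F : Matrix n n ℝ) (u b c : n → ℝ)
    (t : ℝ) :
    (F + t • vecMulVec u b) *ᵥ c = F *ᵥ c + (t * (b ⬝ᵥ c)) • u := by
  rw [add_mulVec, smul_mulVec, vecMulVec_mulVec, op_smul_eq_smul, smul_smul]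

theorem dotProduct_vvec_self : vvec ⬝ᵥ vvec = 1 := by
  norm_num [vvec, dotProduct, Fin.sum_univ_two, ← sq]

theorem dotProduct_wvec_self : wvec ⬝ᵥ wvec = 1 := by
  norm_num [wvec, dotProduct, Fin.sum_univ_two, ← sq]

theorem dotProduct_vvec_wvec : vvec ⬝ᵥ wvec = 0 := by
  simp [vvec, wvec, dotProduct, Fin.sum_univ_two]

theorem det_eq_mulVec_wvec_mul_mulVec_vvec (F : Matrix (Fin 2) (Fin 2) ℝ) :
    F.det = (F *ᵥ wvec) 0 * (F *ᵥ vvec) 1 - (F *ᵥ wvec) 1 * (F *ᵥ vvec) 0 := by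
  simp only [det_fin_two, mulVec, dotProduct, vvec, wvec, one_div, Fin.sum_univ_two,
    cons_val_zero, cons_val_one, cons_val_fin_one, mul_neg]
  linear_combination (-2 * (F 0 0 * F 1 1 - F 0 1 * F 1 0)) * inv_sqrt_two_sq

theorem xF_eq_norm (F : Matrix (Fin 2) (Fin 2) ℝ) :
    xF F = ‖(WithLp.toLp 2 (F *ᵥ vvec) : EuclideanSpace ℝ (Fin 2))‖ :=
  (norm_toLp_eq_sqrt_sum_sq _).symm

theorem yF_eq_norm (F : Matrix (Fin 2) (Fin 2) ℝ) :
    yF F = ‖(WithLp.toLp 2 (F *ᵥ wvec) : EuclideanSpace ℝ (Fin 2))‖ :=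
  (norm_toLp_eq_sqrt_sum_sq _).symm

section RankOneConvex

variable {l : ℝ} {ψ : Matrix (Fin 2) (Fin 2) ℝ → ℝ}

theorem le_gfun_of_le_distSqK (hl : l ≠ 0) (hle : ∀ G, ψ G ≤ distSqK l G)
    (G : Matrix (Fin 2) (Fin 2) ℝ) : ψ G ≤ gfun l (xF G) (yF G) G.det :=
  (hle G).trans (distSqK_le_gfun hl G)

theorem RankOneConvex.le_gfun_of_yF_le (hψ : RankOneConvex ψ) (hl : l ≠ 0)
    (hle : ∀ G, ψ G ≤ distSqK l G) (F : Matrix (Fin 2) (Fin 2) ℝ) {η : ℝ} (hη : yF F ≤ η) :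
    ψ F ≤ gfun l (xF F) η F.det := by
  obtain ⟨u, hu, hux⟩ := exists_norm_eq_one_mul_eq_mul (F *ᵥ vvec)
  rw [yF_eq_norm] at hη
  simpa using (hψ F u wvec).le_of_forall_norm_add_smul_eq hu hη fun t ht => by
    have hv : (F + t • vecMulVec u wvec) *ᵥ vvec = F *ᵥ vvec := by
      rw [add_smul_vecMulVec_mulVec, dotProduct_comm, dotProduct_vvec_wvec, mul_zero, zero_smul,
        add_zero]
    have hw : (F + t • vecMulVec u wvec) *ᵥ wvec = F *ᵥ wvec + t • u := by
      rw [add_smul_vecMulVec_mulVec, dotProduct_wvec_self, mul_one]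
    refine (le_gfun_of_le_distSqK hl hle _).trans_eq ?_
    rw [xF_eq_norm, yF_eq_norm, hv, hw, ← ht, det_eq_mulVec_wvec_mul_mulVec_vvec, hv, hw,
      det_eq_mulVec_wvec_mul_mulVec_vvec F, ← xF_eq_norm]
    simp only [Pi.add_apply, Pi.smul_apply, smul_eq_mul, WithLp.toLp_add, WithLp.toLp_smul]
    congr 1
    linear_combination t * hux

theorem RankOneConvex.le_gfun_of_xF_le (hψ : RankOneConvex ψ) (hl : l ≠ 0)
    (hle : ∀ G, ψ G ≤ distSqK l G) (F : Matrix (Fin 2) (Fin 2) ℝ) {ξ : ℝ} (hξ : xF F ≤ ξ) :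
    ψ F ≤ gfun l ξ (yF F) F.det := by
  obtain ⟨u, hu, huy⟩ := exists_norm_eq_one_mul_eq_mul (F *ᵥ wvec)
  rw [xF_eq_norm] at hξ
  simpa using (hψ F u vvec).le_of_forall_norm_add_smul_eq hu hξ fun t ht => by
    have hv : (F + t • vecMulVec u vvec) *ᵥ vvec = F *ᵥ vvec + t • u := by
      rw [add_smul_vecMulVec_mulVec, dotProduct_vvec_self, mul_one]
    have hw : (F + t • vecMulVec u vvec) *ᵥ wvec = F *ᵥ wvec := by
      rw [add_smul_vecMulVec_mulVec, dotProduct_vvec_wvec, mul_zero, zero_smul, add_zero]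
    refine (le_gfun_of_le_distSqK hl hle _).trans_eq ?_
    rw [xF_eq_norm, yF_eq_norm, hv, hw, ← ht, det_eq_mulVec_wvec_mul_mulVec_vvec, hv, hw,
      det_eq_mulVec_wvec_mul_mulVec_vvec F, ← yF_eq_norm]
    simp only [Pi.add_apply, Pi.smul_apply, smul_eq_mul, WithLp.toLp_add, WithLp.toLp_smul]
    congr 1
    linear_combination -t * huy

end RankOneConvex

/-- Any rank-one convex `ψ ≤ dist²(·,K)` satisfies `ψ(F) ≤ g(|Fv|, η, det F)` for
every `η ≥ |Fw|`, and symmetrically `ψ(F) ≤ g(ξ, |Fw|, det F)` for every `ξ ≥ |Fv|`. -/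
theorem rankOneConvex_le_g (l : ℝ) (hl : 1 < l)
    (ψ : Matrix (Fin 2) (Fin 2) ℝ → ℝ) (hψ : RankOneConvex ψ)
    (hle : ∀ G, ψ G ≤ distSqK l G) (F : Matrix (Fin 2) (Fin 2) ℝ) :
    (∀ η : ℝ, yF F ≤ η → ψ F ≤ gfun l (xF F) η F.det) ∧
    (∀ ξ : ℝ, xF F ≤ ξ → ψ F ≤ gfun l ξ (yF F) F.det) := by
  have hl₀ : l ≠ 0 := (zero_lt_one.trans hl).ne'
  exact ⟨fun η => hψ.le_gfun_of_yF_le hl₀ hle F, fun ξ => hψ.le_gfun_of_xF_le hl₀ hle F⟩
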